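/- arXiv:2412.13427 — 2 statements merged into one kernel-verified Lean document; each statement's English description precedes it below -/
import Mathlib

section
/- Let μ = ν * ω be a convolution of two compactly supported Borel probability measures on ℝ, and let Λ be a bi-zero set of ν. Then Λ is a bi-zero set of μ; moreover, if ω is not a Dirac measure, then Λ is not a spectrum of μ. -/
/-!
Since `⟪e_a, e_b⟫_{L²(μ)} = μ̂(b - a)`, the exponentials `e_λ`, `λ ∈ Λ`, are orthonormal in
`L²(μ)` exactly when `Λ` is a bi-zero set of `μ`; the Fourier transform of `ν * ω` is `ν̂ ω̂`,
which gives the first claim.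
If `Λ` were moreover a spectrum of `ν * ω`, then Parseval in `L²(ν * ω)` and Bessel in `L²(ν)`,
applied to `e_t`, give `∑_λ |ν̂(λ - t)|² |ω̂(λ - t)|² = 1 ≥ ∑_λ |ν̂(λ - t)|²`; hence `|ω̂| = 1`
wherever `ν̂ ≠ 0`, in particular on a neighbourhood of `0`. Now `|ω̂(t)| = 1` forces
`t (x - y) ∈ ℤ` for `ω ⊗ ω`-almost every `(x, y)`, and two such `t` with irrational ratio force
`x = y` almost everywhere, so `ω` only takes the values `0` and `1`: it is a Dirac mass.
-/

open MeasureTheory Complex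

/-- The exponential function `x ↦ e^{2πiλx}`. -/
noncomputable def expFn (l : ℝ) : ℝ → ℂ := fun x => Complex.exp (2 * Real.pi * Complex.I * l * x)

/-- The Fourier transform `μ̂(t) = ∫ e^{2πitx} dμ(x)`. -/
noncomputable def ft (μ : Measure ℝ) (t : ℝ) : ℂ :=
  ∫ x, Complex.exp (2 * Real.pi * Complex.I * t * x) ∂μ

/-- `Λ` is a bi-zero set of `μ` : `(Λ - Λ) \ {0} ⊆ {t : μ̂(t) = 0}`. -/
def IsBiZero (μ : Measure ℝ) (Λ : Set ℝ) : Prop :=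
  ∀ a ∈ Λ, ∀ b ∈ Λ, a ≠ b → ft μ (a - b) = 0

/-- `Λ` is a spectrum of `μ` : the exponentials `e^{2πiλx}`, `λ ∈ Λ`, belong to `L²(μ)` and
form an orthonormal basis of `L²(μ)`. -/
def IsSpectrum (μ : Measure ℝ) (Λ : Set ℝ) : Prop :=
  ∃ h : ∀ l : Λ, MemLp (expFn (l : ℝ)) 2 μ,
    Orthonormal ℂ (fun l : Λ => (h l).toLp (expFn (l : ℝ))) ∧
    (Submodule.span ℂ
      (Set.range fun l : Λ => (h l).toLp (expFn (l : ℝ)))).topologicalClosure = ⊤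

open Filter
open scoped Real Topology

lemma expFn_eq_exp (l x : ℝ) : expFn l x = exp (↑(2 * π * l * x) * I) := by
  simp only [expFn]; push_cast; ring_nf

lemma continuous_expFn (l : ℝ) : Continuous (expFn l) := by
  unfold expFn; fun_prop

lemma norm_expFn (l x : ℝ) : ‖expFn l x‖ = 1 := by
  rw [expFn_eq_exp, norm_exp_ofReal_mul_I]

lemma re_expFn (l x : ℝ) : (expFn l x).re = Real.cos (2 * π * l * x) := by
  rw [expFn_eq_exp, exp_ofReal_mul_I_re]

lemma expFn_sub_right (l x y : ℝ) : expFn l (x - y) = expFn l x * expFn (-l) y := by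
  simp only [expFn, ← Complex.exp_add]; push_cast; ring_nf

lemma mul_conj_expFn (a b x : ℝ) :
    expFn b x * (starRingEnd ℂ) (expFn a x) = expFn (b - a) x := by
  simp only [expFn, ← exp_conj, ← Complex.exp_add, map_mul, conj_I, conj_ofReal, map_ofNat]
  push_cast
  ring_nf

lemma ft_eq_charFun (μ : Measure ℝ) (t : ℝ) : ft μ t = charFun μ (2 * π * t) := by
  simp only [ft, charFun_apply_real]; push_cast; ring_nf

lemma ft_eq_integral_expFn (μ : Measure ℝ) (t : ℝ) : ft μ t = ∫ x, expFn t x ∂μ := rfl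

lemma ft_zero (μ : Measure ℝ) [IsProbabilityMeasure μ] : ft μ 0 = 1 := by
  simp [ft_eq_charFun]

lemma ft_neg (μ : Measure ℝ) (t : ℝ) : ft μ (-t) = (starRingEnd ℂ) (ft μ t) := by
  simp [ft_eq_charFun, ← charFun_neg]

lemma norm_ft_le_one (μ : Measure ℝ) [IsProbabilityMeasure μ] (t : ℝ) : ‖ft μ t‖ ≤ 1 := by
  rw [ft_eq_charFun]; exact norm_charFun_le_one _

lemma continuous_ft (μ : Measure ℝ) [IsFiniteMeasure μ] : Continuous (ft μ) := by
  simp only [funext (ft_eq_charFun μ)]; fun_prop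

lemma ft_conv (ν ω : Measure ℝ) [IsFiniteMeasure ν] [IsFiniteMeasure ω] (t : ℝ) :
    ft (ν ∗ ω) t = ft ν t * ft ω t := by
  simp [ft_eq_charFun, charFun_conv]

lemma memLp_expFn (μ : Measure ℝ) [IsFiniteMeasure μ] (p : ENNReal) (l : ℝ) :
    MemLp (expFn l) p μ :=
  MemLp.of_bound (continuous_expFn l).aestronglyMeasurable 1
    (.of_forall fun x => (norm_expFn l x).le)

lemma inner_toLp_expFn {μ : Measure ℝ} {a b : ℝ} (ha : MemLp (expFn a) 2 μ)
    (hb : MemLp (expFn b) 2 μ) :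
    inner ℂ (ha.toLp (expFn a)) (hb.toLp (expFn b)) = ft μ (b - a) := by
  rw [L2.inner_def, ft_eq_integral_expFn]
  refine integral_congr_ae ?_
  filter_upwards [ha.coeFn_toLp, hb.coeFn_toLp] with x hxa hxb
  rw [hxa, hxb, RCLike.inner_apply, mul_conj_expFn]

lemma norm_toLp_expFn {μ : Measure ℝ} [IsProbabilityMeasure μ] {l : ℝ}
    (hl : MemLp (expFn l) 2 μ) : ‖hl.toLp (expFn l)‖ = 1 := by
  have h := @norm_sq_eq_re_inner ℂ _ _ _ _ (hl.toLp (expFn l))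
  rwa [inner_toLp_expFn, sub_self, ft_zero, RCLike.one_re,
    pow_eq_one_iff_of_nonneg (norm_nonneg _) two_ne_zero] at h

lemma orthonormal_expFn_of_isBiZero {μ : Measure ℝ} [IsProbabilityMeasure μ] {Λ : Set ℝ}
    (hΛ : IsBiZero μ Λ) (hm : ∀ l : Λ, MemLp (expFn l) 2 μ) :
    Orthonormal ℂ (fun l : Λ => (hm l).toLp (expFn l)) := by
  rw [orthonormal_iff_ite]
  intro i j
  rw [inner_toLp_expFn]
  split_ifs with h
  · rw [h, sub_self, ft_zero]
  · exact hΛ j j.2 i i.2 fun hji => h (Subtype.ext hji.symm)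

lemma IsBiZero.conv {ν : Measure ℝ} {Λ : Set ℝ} (hΛ : IsBiZero ν Λ) (ω : Measure ℝ)
    [IsFiniteMeasure ν] [IsFiniteMeasure ω] : IsBiZero (ν ∗ ω) Λ := by
  intro a ha b hb hab
  rw [ft_conv, hΛ a ha b hb hab, zero_mul]

lemma norm_ft_sub_comm (μ : Measure ℝ) (a b : ℝ) : ‖ft μ (a - b)‖ = ‖ft μ (b - a)‖ := by
  rw [← neg_sub, ft_neg, RCLike.norm_conj]

lemma IsSpectrum.nonempty {μ : Measure ℝ} [IsProbabilityMeasure μ] {Λ : Set ℝ}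
    (hΛ : IsSpectrum μ Λ) : Λ.Nonempty := by
  obtain ⟨hm, -, hdense⟩ := hΛ
  rw [Set.nonempty_iff_ne_empty]
  rintro rfl
  have h1 := memLp_expFn μ 2 0
  have hmem : h1.toLp (expFn 0) ∈ (Submodule.span ℂ
      (Set.range fun l : (∅ : Set ℝ) => (hm l).toLp (expFn l))).topologicalClosure :=
    hdense ▸ Submodule.mem_top
  simp only [Set.range_eq_empty, Submodule.span_empty, Submodule.topologicalClosure_eq_self,
    Submodule.mem_bot] at hmem
  simpa [hmem] using norm_toLp_expFn h1

lemma IsSpectrum.hasSum_norm_ft_sq {μ : Measure ℝ} [IsProbabilityMeasure μ] {Λ : Set ℝ}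
    (hΛ : IsSpectrum μ Λ) (t : ℝ) : HasSum (fun l : Λ => ‖ft μ (l - t)‖ ^ 2) 1 := by
  obtain ⟨hm, horth, hdense⟩ := hΛ
  have hf := memLp_expFn μ 2 t
  have h := (HilbertBasis.mk horth hdense.ge).hasSum_inner_mul_inner (hf.toLp (expFn t))
    (hf.toLp (expFn t))
  have hterm : ∀ l : Λ, ft μ (l - t) * ft μ (t - l) = ((‖ft μ (l - t)‖ ^ 2 : ℝ) : ℂ) := by
    intro l
    rw [← neg_sub (l : ℝ) t, ft_neg, mul_conj, normSq_eq_norm_sq]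
  simp only [HilbertBasis.coe_mk, inner_toLp_expFn, sub_self, ft_zero, hterm, ← ofReal_one] at h
  exact hasSum_ofReal.1 h

lemma IsBiZero.summable_norm_ft_sq_and_tsum_le_one {μ : Measure ℝ} [IsProbabilityMeasure μ]
    {Λ : Set ℝ} (hΛ : IsBiZero μ Λ) (t : ℝ) :
    Summable (fun l : Λ => ‖ft μ (l - t)‖ ^ 2) ∧ ∑' l : Λ, ‖ft μ (l - t)‖ ^ 2 ≤ 1 := by
  have horth := orthonormal_expFn_of_isBiZero hΛ fun l => memLp_expFn μ 2 l
  have hf := memLp_expFn μ 2 t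
  have hterm : (fun l : Λ =>
      ‖inner ℂ ((memLp_expFn μ 2 l).toLp (expFn l)) (hf.toLp (expFn t))‖ ^ 2)
      = fun l : Λ => ‖ft μ (l - t)‖ ^ 2 := by
    funext l
    rw [inner_toLp_expFn, norm_ft_sub_comm]
  have hbessel := horth.tsum_inner_products_le (hf.toLp (expFn t))
  rw [hterm, norm_toLp_expFn, one_pow] at hbessel
  exact ⟨hterm ▸ horth.inner_products_summable _, hbessel⟩

lemma eq_of_le_of_hasSum_of_tsum_le {ι : Type*} {f g : ι → ℝ} {a : ℝ} (hfg : ∀ i, f i ≤ g i)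
    (hf : HasSum f a) (hg : Summable g) (hga : ∑' i, g i ≤ a) (i : ι) : f i = g i :=
  (hfg i).antisymm (not_lt.1 fun hi => (hasSum_lt hfg hi hf hg.hasSum).not_ge hga)

lemma norm_ft_eq_one_of_isSpectrum_conv {ν ω : Measure ℝ} [IsProbabilityMeasure ν]
    [IsProbabilityMeasure ω] {Λ : Set ℝ} (hbz : IsBiZero ν Λ) (hsp : IsSpectrum (ν ∗ ω) Λ)
    {s : ℝ} (hs : ft ν s ≠ 0) : ‖ft ω s‖ = 1 := by
  obtain ⟨l₀, hl₀⟩ := hsp.nonempty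
  have hle (l : Λ) : ‖ft (ν ∗ ω) (l - (l₀ - s))‖ ^ 2 ≤ ‖ft ν (l - (l₀ - s))‖ ^ 2 := by
    rw [ft_conv, norm_mul]
    gcongr
    exact mul_le_of_le_one_right (norm_nonneg _) (norm_ft_le_one ω _)
  obtain ⟨hsum, hle_one⟩ := hbz.summable_norm_ft_sq_and_tsum_le_one (l₀ - s)
  have heq := eq_of_le_of_hasSum_of_tsum_le hle (hsp.hasSum_norm_ft_sq _) hsum hle_one ⟨l₀, hl₀⟩
  simp only [sub_sub_cancel, ft_conv, norm_mul, mul_pow] at heq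
  have hω : ‖ft ω s‖ ^ 2 = 1 :=
    mul_left_cancel₀ (pow_ne_zero 2 (norm_ne_zero_iff.2 hs)) (heq.trans (mul_one _).symm)
  exact (pow_eq_one_iff_of_nonneg (norm_nonneg _) two_ne_zero).1 hω

lemma ae_exists_int_of_ft_eq_one {ρ : Measure ℝ} [IsProbabilityMeasure ρ] {t : ℝ}
    (h : ft ρ t = 1) : ∀ᵐ x ∂ρ, ∃ n : ℤ, t * x = n := by
  have hexp : Integrable (expFn t) ρ := (memLp_expFn ρ 1 t).integrable le_rfl
  have hint : Integrable (fun x => 1 - expFn t x) ρ := (integrable_const 1).sub hexp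
  have hzero : ∫ x, (1 - expFn t x).re ∂ρ = 0 := by
    have hre := integral_re hint
    simp only [RCLike.re_to_complex] at hre
    rw [hre, integral_sub (integrable_const 1) hexp, ← ft_eq_integral_expFn, h]
    simp
  have hnonneg : 0 ≤ᵐ[ρ] fun x => (1 - expFn t x).re :=
    .of_forall fun x => by simp [re_expFn, Real.cos_le_one]
  filter_upwards [(integral_eq_zero_iff_of_nonneg_ae hnonneg hint.re).1 hzero] with x hx
  have hcos : Real.cos (2 * π * t * x) = 1 := by
    simp only [Pi.zero_apply, sub_re, one_re, re_expFn] at hx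
    linarith
  obtain ⟨n, hn⟩ := (Real.cos_eq_one_iff _).1 hcos
  refine ⟨n, mul_left_cancel₀ (by positivity : 2 * π ≠ 0) ?_⟩
  linear_combination -hn

lemma ft_map_sub_prod (ω : Measure ℝ) [SFinite ω] (t : ℝ) :
    ft ((ω.prod ω).map fun p => p.1 - p.2) t = ‖ft ω t‖ ^ 2 := by
  rw [ft_eq_integral_expFn, integral_map (by fun_prop) (continuous_expFn t).aestronglyMeasurable]
  simp only [expFn_sub_right]
  rw [integral_prod_mul, ← ft_eq_integral_expFn, ← ft_eq_integral_expFn, ft_neg, mul_conj,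
    normSq_eq_norm_sq, ofReal_pow]

lemma eq_zero_of_mul_eq_int_of_irrational {t₁ t₂ x : ℝ} {n m : ℤ}
    (hirr : Irrational (t₂ / t₁)) (hn : t₁ * x = n) (hm : t₂ * x = m) : x = 0 := by
  by_contra hx
  refine hirr.ne_rational m n ?_
  rw [← mul_div_mul_right t₂ t₁ hx, hm, hn]

lemma ae_fst_eq_snd_of_norm_ft_eq_one {ω : Measure ℝ} [IsProbabilityMeasure ω] {t₁ t₂ : ℝ}
    (hirr : Irrational (t₂ / t₁)) (h₁ : ‖ft ω t₁‖ = 1) (h₂ : ‖ft ω t₂‖ = 1) :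
    ∀ᵐ p ∂ω.prod ω, p.1 = p.2 := by
  have hsub : AEMeasurable (fun p : ℝ × ℝ => p.1 - p.2) (ω.prod ω) := by fun_prop
  have := Measure.isProbabilityMeasure_map hsub
  have hint (t : ℝ) (ht : ‖ft ω t‖ = 1) : ∀ᵐ p ∂ω.prod ω, ∃ n : ℤ, t * (p.1 - p.2) = n :=
    ae_of_ae_map hsub (ae_exists_int_of_ft_eq_one (by rw [ft_map_sub_prod, ht]; simp))
  filter_upwards [hint t₁ h₁, hint t₂ h₂] with p ⟨n, hn⟩ ⟨m, hm⟩
  exact sub_eq_zero.1 (eq_zero_of_mul_eq_int_of_irrational hirr hn hm)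

lemma isZeroOneMeasure_of_ae_fst_eq_snd {X : Type*} [MeasurableSpace X] {ω : Measure X}
    [IsProbabilityMeasure ω] (h : ∀ᵐ p ∂ω.prod ω, p.1 = p.2) : IsZeroOneMeasure ω := by
  refine ⟨fun s hs => ?_⟩
  have hprod : ω s * ω sᶜ = 0 := by
    rw [← Measure.prod_prod]
    refine measure_mono_null ?_ (ae_iff.1 h)
    rintro p ⟨hp₁, hp₂⟩ hp
    exact hp₂ (hp ▸ hp₁)
  rcases mul_eq_zero.1 hprod with h0 | h0
  · exact .inl h0
  · exact .inr ((prob_compl_eq_zero_iff hs).1 h0)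

lemma exists_irrational_div_of_mem_nhds {U : Set ℝ} (hU : U ∈ 𝓝 0) :
    ∃ t₁ ∈ U, ∃ t₂ ∈ U, Irrational (t₂ / t₁) := by
  obtain ⟨t₁, ht₁U, ht₁⟩ : (U ∩ {0}ᶜ).Nonempty :=
    Filter.nonempty_of_mem (inter_mem (mem_nhdsWithin_of_mem_nhds hU) self_mem_nhdsWithin)
  have hV : (t₁ * ·) ⁻¹' U ∈ 𝓝 0 :=
    (continuous_const_mul t₁).continuousAt.preimage_mem_nhds (by simpa using hU)
  obtain ⟨r, hrV, hr⟩ := mem_closure_iff_nhds.1 (dense_irrational 0) _ hV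
  exact ⟨t₁, ht₁U, t₁ * r, hrV, by rwa [mul_div_cancel_left₀ r ht₁]⟩

lemma exists_eq_dirac_of_eventually_norm_ft_eq_one {ω : Measure ℝ} [IsProbabilityMeasure ω]
    (h : ∀ᶠ t in 𝓝 0, ‖ft ω t‖ = 1) : ∃ a, ω = Measure.dirac a := by
  obtain ⟨t₁, h₁, t₂, h₂, hirr⟩ := exists_irrational_div_of_mem_nhds h
  have := isZeroOneMeasure_of_ae_fst_eq_snd (ae_fst_eq_snd_of_norm_ft_eq_one hirr h₁ h₂)
  exact IsZeroOneMeasure.exists_eq_dirac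

theorem bizero_of_convolution_general
    (ν ω : Measure ℝ) [IsProbabilityMeasure ν] [IsProbabilityMeasure ω]
    (Λ : Set ℝ) (hbz : IsBiZero ν Λ) :
    IsBiZero (Measure.conv ν ω) Λ ∧
      ((∀ a : ℝ, ω ≠ Measure.dirac a) → ¬ IsSpectrum (Measure.conv ν ω) Λ) := by
  refine ⟨hbz.conv ω, fun hnd hsp => ?_⟩
  have hft_ne : ∀ᶠ s in 𝓝 0, ft ν s ≠ 0 :=
    (continuous_ft ν).continuousAt.eventually_ne (by simp [ft_zero])
  obtain ⟨a, ha⟩ := exists_eq_dirac_of_eventually_norm_ft_eq_one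
    (hft_ne.mono fun s hs => norm_ft_eq_one_of_isSpectrum_conv hbz hsp hs)
  exact hnd a ha

/-- If `μ = Measure.conv ν ω` is a convolution of two compactly supported Borel
probability measures on `ℝ` and `Λ` is a bi-zero set of `ν`, then `Λ` is a bi-zero set
of `μ`; moreover if `ω` is not a Dirac measure then `Λ` is not a spectrum of `μ`. -/
theorem bizero_of_convolution
    (ν ω : Measure ℝ) [IsProbabilityMeasure ν] [IsProbabilityMeasure ω]
    (hν : ∃ K : Set ℝ, IsCompact K ∧ ν Kᶜ = 0)
    (hω : ∃ K : Set ℝ, IsCompact K ∧ ω Kᶜ = 0)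
    (Λ : Set ℝ) (hΛ : Λ.Countable) (hbz : IsBiZero ν Λ) :
    IsBiZero (Measure.conv ν ω) Λ ∧
      ((∀ a : ℝ, ω ≠ Measure.dirac a) → ¬ IsSpectrum (Measure.conv ν ω) Λ) :=
  bizero_of_convolution_general ν ω Λ hbz
end

section
/- Let b_k ≥ n_k ≥ 2 be integers and let Φ_k = {φ_{k,i}}_{i=0}^{n_k−1} with φ_{k,i}(x) = (−1)^i b_k^{−1}(x+i). There exists a unique sequence of nonempty compact sets (E_k)_{k≥1} in ℝ with E_k = ⋃_{i=0}^{n_k−1} φ_{k,i}(E_{k+1}) for all k ≥ 1, such that compositions φ_{k,j_k}∘⋯∘φ_{l,j_l} contract the sets E_{l+1} to points uniformly as l → ∞. -/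
open Filter

/-- The staggered contraction `φ_{k,i}(x) = (-1)^i b_k⁻¹ (x + i)`. -/
noncomputable def phi (b : ℕ → ℕ) (k i : ℕ) (x : ℝ) : ℝ :=
  (-1) ^ i * ((b k : ℝ))⁻¹ * (x + i)

/-- `iterComp b j k l = φ_{k, j k} ∘ φ_{k+1, j (k+1)} ∘ ⋯ ∘ φ_{l, j l}` (identity if `l < k`). -/
noncomputable def iterComp (b : ℕ → ℕ) (j : ℕ → ℕ) (k l : ℕ) : ℝ → ℝ :=
  if h : k ≤ l then phi b k (j k) ∘ iterComp b j (k + 1) l else id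
  termination_by (l + 1) - k
  decreasing_by omega

/-- The attractor set `E_k`: all limit points of `φ_{k,j_k}∘⋯∘φ_{l,j_l}(0)` as `l → ∞`,
over admissible digit sequences. -/
def attractor (b n : ℕ → ℕ) (k : ℕ) : Set ℝ :=
  {x : ℝ | ∃ j : ℕ → ℕ, (∀ i, j i < n i) ∧
    Tendsto (fun l => iterComp b j k l 0) atTop (nhds x)}

/-!
Each `φ_{k,i}` with `i < b_k` contracts by `b_k⁻¹ ≤ 1/2` and maps `[-1, 1]` into itself, so the
compositions `φ_{k,j_k} ∘ ⋯ ∘ φ_{l,j_l}(0)` converge as `l → ∞`, uniformly in the digit sequence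
`j`, to a point `coding b k j`. The attractor `E_k` is the image of the compact space of admissible
digit sequences under this continuous coding map; invariance comes from splitting off the first
digit, and the contraction property from the factor `2^{-(l+1-k)}`.

Uniqueness needs no coding map. Iterating invariance writes a point `x` of one solution `E_k` as
`φ_{k,j_k} ∘ ⋯ ∘ φ_{l,j_l}(a)` with `a ∈ E_{l+1}`; the same composition sends any `c` of another
solution `F_{l+1}` into `F_k`, and the uniform contraction of both families puts that image
within `ε` of `x`. As `F_k` is closed, `E_k ⊆ F_k`.
-/

open Set Function Topology

def IsMoranInvariant (b n : ℕ → ℕ) (E : ℕ → Set ℝ) : Prop :=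
  ∀ k, E k = ⋃ i ∈ Finset.range (n k), phi b k i '' E (k + 1)

def ContractsUniformly (b n : ℕ → ℕ) (E : ℕ → Set ℝ) : Prop :=
  ∀ k, ∀ ε > (0:ℝ), ∃ N : ℕ, ∀ (j : ℕ → ℕ), (∀ i, j i < n i) →
    ∀ l : ℕ, k ≤ l → N ≤ l → ∀ a ∈ E (l + 1), |iterComp b j k l 0 - iterComp b j k l a| < ε

section iterComp

variable (b j : ℕ → ℕ)

lemma iterComp_of_le {k l : ℕ} (h : k ≤ l) :
    iterComp b j k l = phi b k (j k) ∘ iterComp b j (k + 1) l := by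
  rw [iterComp, dif_pos h]

lemma iterComp_of_lt {k l : ℕ} (h : l < k) : iterComp b j k l = id := by
  rw [iterComp, dif_neg h.not_ge]

lemma iterComp_self (k : ℕ) : iterComp b j k k = phi b k (j k) := by
  rw [iterComp_of_le b j le_rfl, iterComp_of_lt b j k.lt_succ_self, comp_id]

lemma iterComp_comp {k l m : ℕ} (hkl : k ≤ l + 1) (hlm : l ≤ m) :
    iterComp b j k m = iterComp b j k l ∘ iterComp b j (l + 1) m := by
  fun_induction iterComp b j k l with
  | case1 k hk ih => rw [iterComp_of_le b j (hk.trans hlm), ih (by omega), comp_assoc]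
  | case2 k hk => rw [show k = l + 1 by omega, id_comp]

lemma iterComp_succ_right {k l : ℕ} (h : k ≤ l + 1) :
    iterComp b j k (l + 1) = iterComp b j k l ∘ phi b (l + 1) (j (l + 1)) := by
  rw [iterComp_comp b j h l.le_succ, iterComp_self]

variable {b j} in
lemma iterComp_congr {j' : ℕ → ℕ} {k l : ℕ} (h : ∀ m, k ≤ m → m ≤ l → j m = j' m) :
    iterComp b j k l = iterComp b j' k l := by
  fun_induction iterComp b j k l with
  | case1 k hk ih => rw [iterComp_of_le b j' hk, h k le_rfl hk,
      ih fun m hm hml => h m (by omega) hml]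
  | case2 k hk => rw [iterComp_of_lt b j' (by omega)]

lemma continuous_iterComp_apply (k l : ℕ) (x : ℝ) : Continuous fun j => iterComp b j k l x := by
  refine continuous_iff_continuousAt.2 fun j₀ =>
    (continuousAt_const (y := iterComp b j₀ k l x)).congr ?_
  filter_upwards [(isOpen_set_pi (finite_Icc k l) fun m _ => isOpen_discrete {j₀ m}).mem_nhds
    (by simp)] with j hj
  exact (congrFun (iterComp_congr (b := b) fun m hkm hml => hj m ⟨hkm, hml⟩) x).symm

lemma continuous_phi (k i : ℕ) : Continuous (phi b k i) := by
  unfold phi; fun_prop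

end iterComp

section contraction

variable {b j : ℕ → ℕ}

lemma abs_phi_sub_phi_le {k : ℕ} (hb : 2 ≤ b k) (i : ℕ) (x y : ℝ) :
    |phi b k i x - phi b k i y| ≤ 2⁻¹ * |x - y| := by
  have hb' : (2:ℝ) ≤ b k := by exact_mod_cast hb
  have : phi b k i x - phi b k i y = (-1) ^ i * (b k : ℝ)⁻¹ * (x - y) := by unfold phi; ring
  rw [this, abs_mul, abs_mul, abs_pow, abs_neg, abs_one, one_pow, one_mul, abs_inv, Nat.abs_cast]
  gcongr

lemma abs_phi_le_one {k i : ℕ} (hi : i < b k) {x : ℝ} (hx : |x| ≤ 1) : |phi b k i x| ≤ 1 := by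
  have hi' : (i:ℝ) + 1 ≤ b k := by exact_mod_cast hi
  have hxi : |x + i| ≤ b k := (abs_add_le x i).trans (by rw [Nat.abs_cast]; linarith)
  rw [phi, abs_mul, abs_mul, abs_pow, abs_neg, abs_one, one_pow, one_mul, abs_inv, Nat.abs_cast,
    inv_mul_le_iff₀ (by linarith), mul_one]
  exact hxi

lemma abs_iterComp_sub_le (hb : ∀ i, 2 ≤ b i) (k l : ℕ) (x y : ℝ) :
    |iterComp b j k l x - iterComp b j k l y| ≤ 2⁻¹ ^ (l + 1 - k) * |x - y| := by
  fun_induction iterComp b j k l with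
  | case1 k hk ih =>
    calc _ ≤ 2⁻¹ * |iterComp b j (k + 1) l x - iterComp b j (k + 1) l y| :=
          abs_phi_sub_phi_le (hb k) _ _ _
      _ ≤ 2⁻¹ * (2⁻¹ ^ (l + 1 - (k + 1)) * |x - y|) := by gcongr
      _ = 2⁻¹ ^ (l + 1 - k) * |x - y| := by
        rw [← mul_assoc, ← pow_succ', show l + 1 - (k + 1) + 1 = l + 1 - k by omega]
  | case2 k hk => simp [show l + 1 - k = 0 by omega]

lemma abs_iterComp_le_one (hj : ∀ i, j i < b i) (k l : ℕ) {x : ℝ} (hx : |x| ≤ 1) :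
    |iterComp b j k l x| ≤ 1 := by
  fun_induction iterComp b j k l with
  | case1 k hk ih => exact abs_phi_le_one (hj k) ih
  | case2 k hk => exact hx

lemma abs_iterComp_zero_sub_le (hb : ∀ i, 2 ≤ b i) (k l : ℕ) {y : ℝ}
    (hy : |y| ≤ 1) : |iterComp b j k l 0 - iterComp b j k l y| ≤ 2⁻¹ ^ (l + 1 - k) := by
  refine (abs_iterComp_sub_le hb k l 0 y).trans (mul_le_of_le_one_right (by positivity) ?_)
  rwa [zero_sub, abs_neg]

lemma dist_iterComp_zero_le (hb : ∀ i, 2 ≤ b i) (hj : ∀ i, j i < b i) (k : ℕ) {l m : ℕ}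
    (hlm : l ≤ m) : dist (iterComp b j k l 0) (iterComp b j k m 0) ≤ 2⁻¹ ^ (l + 1 - k) := by
  rw [Real.dist_eq]
  by_cases hkl : k ≤ l + 1
  · rw [iterComp_comp b j hkl hlm, comp_apply]
    exact abs_iterComp_zero_sub_le hb k l (abs_iterComp_le_one hj _ _ (by simp))
  · rw [iterComp_of_lt b j (by omega), id, zero_sub, abs_neg, show l + 1 - k = 0 by omega, pow_zero]
    exact abs_iterComp_le_one hj _ _ (by simp)

lemma tendsto_two_inv_pow_sub (k : ℕ) :
    Tendsto (fun l => (2⁻¹ : ℝ) ^ (l + 1 - k)) atTop (𝓝 0) :=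
  (tendsto_pow_atTop_nhds_zero_of_lt_one (by norm_num) (by norm_num)).comp
    ((tendsto_sub_atTop_nat k).comp (tendsto_add_atTop_nat 1))

end contraction

noncomputable def coding (b : ℕ → ℕ) (k : ℕ) (j : ℕ → ℕ) : ℝ :=
  limUnder atTop fun l => iterComp b j k l 0

section coding

variable {b j : ℕ → ℕ}

lemma tendsto_iterComp_coding (hb : ∀ i, 2 ≤ b i) (hj : ∀ i, j i < b i) (k : ℕ) :
    Tendsto (fun l => iterComp b j k l 0) atTop (𝓝 (coding b k j)) :=
  (cauchySeq_of_le_tendsto_0' _ (fun _ _ => dist_iterComp_zero_le hb hj k)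
    (tendsto_two_inv_pow_sub k)).tendsto_limUnder

lemma dist_iterComp_coding_le (hb : ∀ i, 2 ≤ b i) (hj : ∀ i, j i < b i) (k l : ℕ) :
    dist (iterComp b j k l 0) (coding b k j) ≤ 2⁻¹ ^ (l + 1 - k) :=
  le_of_tendsto (x := atTop) (tendsto_const_nhds.dist (tendsto_iterComp_coding hb hj k))
    ((eventually_ge_atTop l).mono fun _ => dist_iterComp_zero_le hb hj k)

lemma continuousOn_coding (hb : ∀ i, 2 ≤ b i) (k : ℕ) :
    ContinuousOn (coding b k) {j | ∀ i, j i < b i} := by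
  refine TendstoUniformlyOn.continuousOn (F := fun l j => iterComp b j k l 0) (p := atTop) ?_
    (Frequently.of_forall fun l => (continuous_iterComp_apply b k l 0).continuousOn)
  rw [Metric.tendstoUniformlyOn_iff]
  intro ε hε
  filter_upwards [(tendsto_two_inv_pow_sub k).eventually (gt_mem_nhds hε)] with l hl j hj
  exact (dist_comm _ _).trans_le (dist_iterComp_coding_le hb hj k l) |>.trans_lt hl

end coding

lemma forall_update_lt {j n : ℕ → ℕ} (hj : ∀ i, j i < n i) {k i : ℕ} (hi : i < n k) :
    ∀ m, update j k i m < n m :=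
  (forall_update_iff j fun m v => v < n m).2 ⟨hi, fun m _ => hj m⟩

section attractor

variable {b n : ℕ → ℕ}

lemma attractor_eq_image (hb : ∀ i, 2 ≤ b i) (hbn : ∀ i, n i ≤ b i) (k : ℕ) :
    attractor b n k = coding b k '' {j | ∀ i, j i < n i} := by
  ext x
  constructor
  · rintro ⟨j, hj, hx⟩
    exact ⟨j, hj, hx.limUnder_eq⟩
  · rintro ⟨j, hj, rfl⟩
    exact ⟨j, hj, tendsto_iterComp_coding hb (fun i => (hj i).trans_le (hbn i)) k⟩

lemma isCompact_attractor (hb : ∀ i, 2 ≤ b i) (hbn : ∀ i, n i ≤ b i) (k : ℕ) :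
    IsCompact (attractor b n k) := by
  have hdigits : {j : ℕ → ℕ | ∀ i, j i < n i} = univ.pi fun i => Iio (n i) := by
    ext; simp
  rw [attractor_eq_image hb hbn, hdigits]
  exact (isCompact_univ_pi fun i => (finite_Iio _).isCompact).image_of_continuousOn
    ((continuousOn_coding hb k).mono fun j hj i => (hj i trivial).trans_le (hbn i))

lemma attractor_nonempty (hb : ∀ i, 2 ≤ b i) (hbn : ∀ i, n i ≤ b i) (hn : ∀ i, 0 < n i)
    (k : ℕ) : (attractor b n k).Nonempty := by
  rw [attractor_eq_image hb hbn]
  exact Nonempty.image _ ⟨fun _ => 0, hn⟩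

lemma abs_le_one_of_mem_attractor (hbn : ∀ i, n i ≤ b i) {k : ℕ} {x : ℝ}
    (hx : x ∈ attractor b n k) : |x| ≤ 1 := by
  obtain ⟨j, hj, hx⟩ := hx
  exact le_of_tendsto' hx.abs fun l =>
    abs_iterComp_le_one (fun i => (hj i).trans_le (hbn i)) k l (by simp)

lemma tendsto_iterComp_update {j : ℕ → ℕ} {k : ℕ} {y : ℝ}
    (hy : Tendsto (fun l => iterComp b j (k + 1) l 0) atTop (𝓝 y)) (i : ℕ) :
    Tendsto (fun l => iterComp b (update j k i) k l 0) atTop (𝓝 (phi b k i y)) := by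
  refine ((continuous_phi b k i).tendsto y |>.comp hy).congr' ?_
  filter_upwards [eventually_ge_atTop k] with l hl
  rw [comp_apply, iterComp_of_le _ _ hl, comp_apply, update_self,
    iterComp_congr fun m hkm _ => update_of_ne (by omega) i j]

lemma isMoranInvariant_attractor (hb : ∀ i, 2 ≤ b i) (hbn : ∀ i, n i ≤ b i) :
    IsMoranInvariant b n (attractor b n) := by
  intro k
  ext x
  simp only [mem_iUnion, Finset.mem_range, mem_image, exists_prop]
  constructor
  · rintro ⟨j, hj, hx⟩
    have hy := tendsto_iterComp_coding hb (fun i => (hj i).trans_le (hbn i)) (k + 1)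
    refine ⟨j k, hj k, _, ⟨j, hj, hy⟩, tendsto_nhds_unique ?_ hx⟩
    simpa only [update_eq_self] using tendsto_iterComp_update hy (j k)
  · rintro ⟨i, hi, y, ⟨j, hj, hy⟩, rfl⟩
    exact ⟨update j k i, forall_update_lt hj hi, tendsto_iterComp_update hy i⟩

lemma contractsUniformly_attractor (hb : ∀ i, 2 ≤ b i) (hbn : ∀ i, n i ≤ b i) :
    ContractsUniformly b n (attractor b n) := by
  intro k ε hε
  obtain ⟨N, hN⟩ := eventually_atTop.1 ((tendsto_two_inv_pow_sub k).eventually (gt_mem_nhds hε))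
  exact ⟨N, fun j _ l _ hl a ha =>
    (abs_iterComp_zero_sub_le hb k l (abs_le_one_of_mem_attractor hbn ha)).trans_lt (hN l hl)⟩

end attractor

section uniqueness

variable {b n : ℕ → ℕ} {E F : ℕ → Set ℝ}

lemma IsMoranInvariant.exists_phi_eq (hE : IsMoranInvariant b n E) {m : ℕ} {y : ℝ}
    (hy : y ∈ E m) : ∃ i < n m, ∃ z ∈ E (m + 1), phi b m i z = y := by
  rw [hE m] at hy
  simpa using hy

lemma IsMoranInvariant.mapsTo_phi (hE : IsMoranInvariant b n E) {m i : ℕ} (hi : i < n m) :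
    MapsTo (phi b m i) (E (m + 1)) (E m) := fun z hz => by
  rw [hE m]
  exact mem_biUnion (Finset.mem_coe.2 (Finset.mem_range.2 hi)) (mem_image_of_mem _ hz)

lemma IsMoranInvariant.mapsTo_iterComp (hE : IsMoranInvariant b n E) {j : ℕ → ℕ}
    (hj : ∀ i, j i < n i) {k l : ℕ} (hkl : k ≤ l) :
    MapsTo (iterComp b j k l) (E (l + 1)) (E k) := by
  induction l, hkl using Nat.le_induction with
  | base => rw [iterComp_self]; exact hE.mapsTo_phi (hj k)
  | succ l hkl ih =>
    rw [iterComp_succ_right b j (by omega)]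
    exact ih.comp (hE.mapsTo_phi (hj _))

lemma IsMoranInvariant.exists_iterComp_eq (hE : IsMoranInvariant b n E) (hn : ∀ i, 0 < n i)
    {k l : ℕ} (hkl : k ≤ l) {x : ℝ} (hx : x ∈ E k) :
    ∃ j : ℕ → ℕ, (∀ i, j i < n i) ∧ ∃ a ∈ E (l + 1), iterComp b j k l a = x := by
  induction l, hkl using Nat.le_induction with
  | base =>
    obtain ⟨i, hi, z, hz, rfl⟩ := hE.exists_phi_eq hx
    exact ⟨update (fun _ => 0) k i, forall_update_lt hn hi, z, hz, by
      rw [iterComp_self, update_self]⟩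
  | succ l hkl ih =>
    obtain ⟨j, hj, a, ha, rfl⟩ := ih
    obtain ⟨i, hi, z, hz, rfl⟩ := hE.exists_phi_eq ha
    refine ⟨update j (l + 1) i, forall_update_lt hj hi, z, hz, ?_⟩
    rw [iterComp_succ_right _ _ (by omega), comp_apply, update_self,
      iterComp_congr fun m _ hml => update_of_ne (by omega) i j]

lemma IsMoranInvariant.subset (hn : ∀ i, 0 < n i)
    (hE : IsMoranInvariant b n E) (hEc : ContractsUniformly b n E)
    (hF : IsMoranInvariant b n F) (hFc : ContractsUniformly b n F)
    (hF_ne : ∀ l, (F l).Nonempty) {k : ℕ} (hF_closed : IsClosed (F k)) : E k ⊆ F k := by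
  intro x hx
  rw [← hF_closed.closure_eq, Metric.mem_closure_iff]
  intro ε hε
  obtain ⟨N₁, hN₁⟩ := hEc k (ε / 2) (half_pos hε)
  obtain ⟨N₂, hN₂⟩ := hFc k (ε / 2) (half_pos hε)
  set l := max k (max N₁ N₂)
  have hkl : k ≤ l := le_max_left _ _
  obtain ⟨j, hj, a, ha, rfl⟩ := hE.exists_iterComp_eq hn hkl hx
  obtain ⟨c, hc⟩ := hF_ne (l + 1)
  refine ⟨iterComp b j k l c, hF.mapsTo_iterComp hj hkl hc, ?_⟩
  calc dist (iterComp b j k l a) (iterComp b j k l c)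
      ≤ |iterComp b j k l 0 - iterComp b j k l a| + |iterComp b j k l 0 - iterComp b j k l c| := by
        rw [Real.dist_eq, abs_sub_comm (iterComp b j k l 0) (iterComp b j k l a)]
        exact abs_sub_le _ _ _
    _ < ε / 2 + ε / 2 :=
        add_lt_add (hN₁ j hj l hkl (by omega) a ha) (hN₂ j hj l hkl (by omega) c hc)
    _ = ε := add_halves ε

lemma IsMoranInvariant.eq (hn : ∀ i, 0 < n i)
    (hE : IsMoranInvariant b n E) (hEc : ContractsUniformly b n E)
    (hE_closed : ∀ k, IsClosed (E k)) (hE_ne : ∀ k, (E k).Nonempty)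
    (hF : IsMoranInvariant b n F) (hFc : ContractsUniformly b n F)
    (hF_closed : ∀ k, IsClosed (F k)) (hF_ne : ∀ k, (F k).Nonempty) : E = F :=
  funext fun k =>
    (hE.subset hn hEc hF hFc hF_ne (hF_closed k)).antisymm
      (hF.subset hn hFc hE hEc hE_ne (hE_closed k))

end uniqueness

/-- For integers `b_k ≥ n_k ≥ 2` there is a unique sequence of nonempty
compact sets `(E_k)` with `E_k = ⋃_{i<n_k} φ_{k,i}(E_{k+1})`, and the compositions
`φ_{k,j_k}∘⋯∘φ_{l,j_l}` contract the sets `E_{l+1}` to points uniformly as `l → ∞`. -/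
theorem moran_attractor_exists_unique
    (b n : ℕ → ℕ) (hbn : ∀ k, n k ≤ b k) (hn : ∀ k, 2 ≤ n k) :
    ∃! E : ℕ → Set ℝ,
      (∀ k, IsCompact (E k) ∧ (E k).Nonempty) ∧
      (∀ k, E k = ⋃ i ∈ Finset.range (n k), phi b k i '' E (k + 1)) ∧
      (∀ k, ∀ ε > (0:ℝ), ∃ N : ℕ, ∀ (j : ℕ → ℕ), (∀ i, j i < n i) →
        ∀ l : ℕ, k ≤ l → N ≤ l → ∀ a ∈ E (l + 1),
          |iterComp b j k l 0 - iterComp b j k l a| < ε) := by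
  have hb : ∀ k, 2 ≤ b k := fun k => (hn k).trans (hbn k)
  have hn₀ : ∀ k, 0 < n k := fun k => two_pos.trans_le (hn k)
  have hA_cpt := isCompact_attractor hb hbn
  have hA_ne := attractor_nonempty hb hbn hn₀
  have hA := isMoranInvariant_attractor hb hbn
  have hAc := contractsUniformly_attractor hb hbn
  refine ⟨attractor b n, ⟨fun k => ⟨hA_cpt k, hA_ne k⟩, hA, hAc⟩, fun E ⟨hE_cpt, hE, hEc⟩ => ?_⟩
  exact IsMoranInvariant.eq hn₀ hE hEc (fun k => (hE_cpt k).1.isClosed) (fun k => (hE_cpt k).2)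
    hA hAc (fun k => (hA_cpt k).isClosed) hA_ne
end
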